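/- arXiv:1810.11334 — 6 statements merged into one kernel-verified Lean document; each statement's English description precedes it below -/
import Mathlib

section
/- Let E be a quantum operation with Kraus operators {Eᵢ} satisfying Σᵢ Eᵢ†Eᵢ ⊑ I, and let {Aₙ} be quantum predicates converging weakly to a quantum predicate A. Then E*(Aₙ) converges weakly to E*(A), where E*(X) = Σᵢ Eᵢ† X Eᵢ. -/
open Filter Topology ContinuousLinearMap
open scoped InnerProductSpace

section KrausDual

variable {𝕜 H K ι : Type*} [RCLike 𝕜]
  [NormedAddCommGroup H] [InnerProductSpace 𝕜 H] [CompleteSpace H]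
  [NormedAddCommGroup K] [InnerProductSpace 𝕜 K] [CompleteSpace K]

theorem inner_sum_adjoint_comp_comp_apply (s : Finset ι) (E : ι → H →L[𝕜] K)
    (X : K →L[𝕜] K) (ψ φ : H) :
    ⟪ψ, (∑ i ∈ s, adjoint (E i) ∘L X ∘L E i) φ⟫_𝕜 = ∑ i ∈ s, ⟪E i ψ, X (E i φ)⟫_𝕜 := by
  simp only [sum_apply, inner_sum, comp_apply, adjoint_inner_right]

theorem tendsto_inner_sum_adjoint_comp_comp_apply {α : Type*} {l : Filter α}
    (s : Finset ι) (E : ι → H →L[𝕜] K) {A : α → K →L[𝕜] K} {L : K →L[𝕜] K}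
    (hA : ∀ ψ φ : K, Tendsto (fun a => ⟪ψ, A a φ⟫_𝕜) l (𝓝 ⟪ψ, L φ⟫_𝕜)) (ψ φ : H) :
    Tendsto (fun a => ⟪ψ, (∑ i ∈ s, adjoint (E i) ∘L A a ∘L E i) φ⟫_𝕜) l
      (𝓝 ⟪ψ, (∑ i ∈ s, adjoint (E i) ∘L L ∘L E i) φ⟫_𝕜) := by
  simp only [inner_sum_adjoint_comp_comp_apply]
  exact tendsto_finsetSum s fun i _ => hA (E i ψ) (E i φ)

end KrausDual

theorem dual_weak_continuous_general
    {H : Type*} [NormedAddCommGroup H] [InnerProductSpace ℂ H] [CompleteSpace H]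
    {k : ℕ} (E : Fin k → H →L[ℂ] H)
    (A : ℕ → H →L[ℂ] H) (L : H →L[ℂ] H)
    (hweak : ∀ ψ φ : H, Tendsto (fun n => ⟪ψ, (A n) φ⟫_ℂ) atTop (𝓝 ⟪ψ, L φ⟫_ℂ)) :
    ∀ ψ φ : H,
      Tendsto (fun n => ⟪ψ, (∑ i, (adjoint (E i)) ∘L (A n) ∘L (E i)) φ⟫_ℂ) atTop
        (𝓝 ⟪ψ, (∑ i, (adjoint (E i)) ∘L L ∘L (E i)) φ⟫_ℂ) :=
  tendsto_inner_sum_adjoint_comp_comp_apply Finset.univ E hweak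

/-- The dual `E*(X) = Σᵢ Eᵢ† X Eᵢ` of a quantum operation is continuous with
respect to weak operator convergence of quantum predicates. -/
theorem dual_weak_continuous
    {H : Type*} [NormedAddCommGroup H] [InnerProductSpace ℂ H] [CompleteSpace H]
    {k : ℕ} (E : Fin k → H →L[ℂ] H)
    (hE : ((1 : H →L[ℂ] H) - ∑ i, (adjoint (E i)) ∘L (E i)).IsPositive)
    (A : ℕ → H →L[ℂ] H) (L : H →L[ℂ] H)
    (hA : ∀ n, (A n).IsPositive ∧ ((1 : H →L[ℂ] H) - A n).IsPositive)
    (hL : L.IsPositive ∧ ((1 : H →L[ℂ] H) - L).IsPositive)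
    (hweak : ∀ ψ φ : H, Tendsto (fun n => ⟪ψ, (A n) φ⟫_ℂ) atTop (𝓝 ⟪ψ, L φ⟫_ℂ)) :
    ∀ ψ φ : H,
      Tendsto (fun n => ⟪ψ, (∑ i, (adjoint (E i)) ∘L (A n) ∘L (E i)) φ⟫_ℂ) atTop
        (𝓝 ⟪ψ, (∑ i, (adjoint (E i)) ∘L L ∘L (E i)) φ⟫_ℂ) :=
  dual_weak_continuous_general E A L hweak
end

section
/- Let E be a quantum operation on Hilbert space H with dual E*, and A, B quantum predicates. Then tr(Aρ) ≤ tr(B·E(ρ)) + (tr(ρ) - tr(E(ρ))) holds for all density operators ρ if and only if A ⊑ E*(B) + (I - E*(I)). -/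
/-!
Because `E*` is the adjoint of `E` for the trace pairing, `tr(E*(X) ρ) = tr(X E(ρ))`, the
inequality for a given `ρ` rearranges to `0 ≤ re tr(M ρ)` with the Hermitian matrix
`M = E*(B) + (I - E*(I)) - A`. By rescaling, it suffices to know this for density operators
rather than all positive `ρ`; and a Hermitian `M` with `0 ≤ re tr(M ρ)` for every positive `ρ`
is positive semidefinite, as one sees by taking `ρ = x xᴴ`. Conversely `tr(M ρ) ≥ 0` for positive
`M, ρ`, by writing `ρ = Sᴴ S` and cycling the trace to `tr(S M Sᴴ)`.
-/

open Matrix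
open scoped ComplexOrder

namespace Matrix

variable {n 𝕜 : Type*} [RCLike 𝕜]

section PosSemidef

variable [Fintype n]

lemma trace_mul_vecMulVec_star (M : Matrix n n 𝕜) (x : n → 𝕜) :
    (M * vecMulVec x (star x)).trace = star x ⬝ᵥ M *ᵥ x := by
  simp only [trace, diag, mul_apply, vecMulVec_apply, dotProduct, mulVec, Finset.mul_sum]
  exact Finset.sum_congr rfl fun i _ => Finset.sum_congr rfl fun j _ => by ring

open scoped MatrixOrder in
lemma PosSemidef.trace_mul_nonneg {A B : Matrix n n 𝕜} (hA : A.PosSemidef) (hB : B.PosSemidef) :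
    0 ≤ (A * B).trace := by
  classical
  obtain ⟨S, rfl⟩ := CStarAlgebra.nonneg_iff_eq_star_mul_self.mp hB.nonneg
  rw [star_eq_conjTranspose, ← Matrix.mul_assoc, trace_mul_cycle]
  exact (hA.mul_mul_conjTranspose_same S).trace_nonneg

lemma IsHermitian.posSemidef_iff_forall_re_trace_mul_nonneg {M : Matrix n n 𝕜}
    (hM : M.IsHermitian) :
    M.PosSemidef ↔ ∀ ρ : Matrix n n 𝕜, ρ.PosSemidef → 0 ≤ RCLike.re (M * ρ).trace := by
  refine ⟨fun hM' ρ hρ => (RCLike.nonneg_iff.mp (hM'.trace_mul_nonneg hρ)).1,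
    fun h => .of_dotProduct_mulVec_nonneg hM fun x => ?_⟩
  have hre := h _ (posSemidef_vecMulVec_self_star x)
  rw [trace_mul_vecMulVec_star] at hre
  exact RCLike.nonneg_iff.mpr ⟨hre, hM.im_star_dotProduct_mulVec_self x⟩

lemma forall_density_iff_forall_posSemidef (M : Matrix n n 𝕜) :
    (∀ ρ : Matrix n n 𝕜, ρ.PosSemidef → ρ.trace = 1 → 0 ≤ RCLike.re (M * ρ).trace) ↔
      ∀ ρ : Matrix n n 𝕜, ρ.PosSemidef → 0 ≤ RCLike.re (M * ρ).trace := by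
  refine ⟨fun h ρ hρ => ?_, fun h ρ hρ _ => h ρ hρ⟩
  rcases eq_or_ne ρ 0 with rfl | hρ0
  · simp
  have htr_pos : 0 < ρ.trace := hρ.trace_nonneg.lt_of_ne' (mt hρ.trace_eq_zero_iff.mp hρ0)
  obtain ⟨t, ht, htr⟩ := RCLike.pos_iff_exists_ofReal.mp htr_pos
  have := h ((t⁻¹ : ℝ) • ρ) (hρ.smul (by positivity)) (by rw [trace_smul, ← htr]; simp [ht.ne'])
  rw [Matrix.mul_smul, trace_smul, RCLike.smul_re] at this
  exact (mul_nonneg_iff_of_pos_left (inv_pos.2 ht)).mp this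

end PosSemidef

section Kraus

variable {ι m : Type*} [Fintype ι] [Fintype m]

def krausMap [Fintype n] (E : ι → Matrix m n 𝕜) (ρ : Matrix n n 𝕜) : Matrix m m 𝕜 :=
  ∑ i, E i * ρ * (E i)ᴴ

def krausDual (E : ι → Matrix m n 𝕜) (X : Matrix m m 𝕜) : Matrix n n 𝕜 :=
  ∑ i, (E i)ᴴ * X * E i

lemma trace_krausDual_mul [Fintype n] (E : ι → Matrix m n 𝕜) (X : Matrix m m 𝕜)
    (ρ : Matrix n n 𝕜) : (krausDual E X * ρ).trace = (X * krausMap E ρ).trace := by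
  simp only [krausDual, krausMap, Matrix.sum_mul, Matrix.mul_sum, trace_sum]
  refine Finset.sum_congr rfl fun i _ => ?_
  simp only [Matrix.mul_assoc]
  rw [trace_mul_comm ((E i)ᴴ)]
  simp only [Matrix.mul_assoc]

lemma IsHermitian.krausDual {X : Matrix m m 𝕜} (hX : X.IsHermitian) (E : ι → Matrix m n 𝕜) :
    (krausDual E X).IsHermitian :=
  isSelfAdjoint_sum _ fun i _ => isHermitian_conjTranspose_mul_mul (E i) hX

end Kraus

end Matrix

theorem partial_correctness_characterization_general {d k : ℕ}
    (E : Fin k → Matrix (Fin d) (Fin d) ℂ)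
    (A B : Matrix (Fin d) (Fin d) ℂ)
    (hA : A.PosSemidef)
    (hB : B.PosSemidef) :
    (∀ ρ : Matrix (Fin d) (Fin d) ℂ, ρ.PosSemidef → ρ.trace = 1 →
        ((A * ρ).trace).re ≤ ((B * ∑ i, E i * ρ * (E i)ᴴ).trace).re +
          ((ρ.trace).re - ((∑ i, E i * ρ * (E i)ᴴ : Matrix (Fin d) (Fin d) ℂ).trace).re)) ↔
      ((∑ i, (E i)ᴴ * B * E i) +
        ((1 : Matrix (Fin d) (Fin d) ℂ) - ∑ i, (E i)ᴴ * (1 : Matrix (Fin d) (Fin d) ℂ) * E i)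
        - A).PosSemidef := by
  change _ ↔ (krausDual E B + (1 - krausDual E 1) - A).PosSemidef
  have hM : (krausDual E B + (1 - krausDual E 1) - A).IsHermitian :=
    ((hB.1.krausDual E).add (isHermitian_one.sub (isHermitian_one.krausDual E))).sub hA.1
  rw [hM.posSemidef_iff_forall_re_trace_mul_nonneg, ← forall_density_iff_forall_posSemidef]
  refine forall₃_congr fun ρ _ _ => ?_
  simp only [add_mul, sub_mul, one_mul, trace_add, trace_sub, trace_krausDual_mul, krausMap,
    map_add, map_sub, RCLike.re_to_complex]
  constructor <;> intro <;> linarith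

/-- Characterization of partial correctness: for all density operators `ρ`,
`tr(Aρ) ≤ tr(B·E(ρ)) + (tr(ρ) - tr(E(ρ)))` iff
`A ⊑ E*(B) + (I - E*(I))`, where `E` is given by Kraus operators. -/
theorem partial_correctness_characterization {d k : ℕ}
    (E : Fin k → Matrix (Fin d) (Fin d) ℂ)
    (hE : ((1 : Matrix (Fin d) (Fin d) ℂ) - ∑ i, (E i)ᴴ * E i).PosSemidef)
    (A B : Matrix (Fin d) (Fin d) ℂ)
    (hA : A.PosSemidef) (hA' : ((1 : Matrix (Fin d) (Fin d) ℂ) - A).PosSemidef)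
    (hB : B.PosSemidef) (hB' : ((1 : Matrix (Fin d) (Fin d) ℂ) - B).PosSemidef) :
    (∀ ρ : Matrix (Fin d) (Fin d) ℂ, ρ.PosSemidef → ρ.trace = 1 →
        ((A * ρ).trace).re ≤ ((B * ∑ i, E i * ρ * (E i)ᴴ).trace).re +
          ((ρ.trace).re - ((∑ i, E i * ρ * (E i)ᴴ : Matrix (Fin d) (Fin d) ℂ).trace).re)) ↔
      ((∑ i, (E i)ᴴ * B * E i) +
        ((1 : Matrix (Fin d) (Fin d) ℂ) - ∑ i, (E i)ᴴ * (1 : Matrix (Fin d) (Fin d) ℂ) * E i)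
        - A).PosSemidef :=
  partial_correctness_characterization_general E A B hA hB
end

section
/- Soundness of rule (R.CC2): let E be a quantum operation with dual E*. Suppose Aᵢ ⊑ E*(Bᵢ) + (I - E*(I)) for i = 1,…,m (partial correctness), and I - E*(I) ⊑ A (termination characterization). If λᵢ ≥ 0 with Σᵢ λᵢ ≥ 1, then Σᵢ λᵢAᵢ - (Σᵢ λᵢ - 1)A ⊑ E*(Σᵢ λᵢBᵢ) + (I - E*(I)). -/
/-!
Scaling the partial-correctness inequalities by `λᵢ ≥ 0` and summing gives
`Σ λᵢAᵢ ⊑ E*(Σ λᵢBᵢ) + (Σ λᵢ)(I - E*(I))` by linearity of `E*`. The surplus `(Σ λᵢ - 1)` copies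
of `I - E*(I)` are then traded for copies of `A` through the termination bound, which is where
`Σ λᵢ ≥ 1` enters.
-/

open Matrix
open scoped ComplexOrder MatrixOrder

theorem sum_smul_sub_smul_le_map_sum_smul_add {𝕜 V W ι : Type*} [Fintype ι]
    [CommRing 𝕜] [PartialOrder 𝕜] [IsOrderedRing 𝕜]
    [AddCommGroup V] [PartialOrder V] [IsOrderedAddMonoid V] [Module 𝕜 V] [PosSMulMono 𝕜 V]
    [AddCommGroup W] [Module 𝕜 W]
    (Φ : W →ₗ[𝕜] V) (M A₀ : V) (A : ι → V) (B : ι → W) (lam : ι → 𝕜)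
    (hlam : ∀ j, 0 ≤ lam j) (hlamsum : 1 ≤ ∑ j, lam j)
    (hcorrect : ∀ j, A j ≤ Φ (B j) + M) (hterm : M ≤ A₀) :
    ∑ j, lam j • A j - (∑ j, lam j - 1) • A₀ ≤ Φ (∑ j, lam j • B j) + M :=
  calc ∑ j, lam j • A j - (∑ j, lam j - 1) • A₀
      ≤ ∑ j, lam j • (Φ (B j) + M) - (∑ j, lam j - 1) • M :=
        sub_le_sub (Finset.sum_le_sum fun j _ => smul_le_smul_of_nonneg_left (hcorrect j) (hlam j))
          (smul_le_smul_of_nonneg_left hterm (sub_nonneg.2 hlamsum))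
    _ = Φ (∑ j, lam j • B j) + M := by
        simp only [smul_add, Finset.sum_add_distrib, map_sum, map_smul, ← Finset.sum_smul]
        module

namespace Matrix

variable {n κ R : Type*} [Fintype n] [DecidableEq n] [Fintype κ] [CommSemiring R] [StarRing R]

/-- The dual `E*` of the quantum operation with Kraus operators `E`. -/
def heisenbergDual (E : κ → Matrix n n R) : Matrix n n R →ₗ[R] Matrix n n R :=
  ∑ i, LinearMap.mulLeftRight R ((E i)ᴴ, E i)

@[simp]
theorem heisenbergDual_apply (E : κ → Matrix n n R) (X : Matrix n n R) :
    heisenbergDual E X = ∑ i, (E i)ᴴ * X * E i := by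
  simp [heisenbergDual, LinearMap.mulLeftRight_apply]

end Matrix

theorem rule_CC2_sound_general {d k m : ℕ}
    (E : Fin k → Matrix (Fin d) (Fin d) ℂ)
    (A B : Fin m → Matrix (Fin d) (Fin d) ℂ) (A₀ : Matrix (Fin d) (Fin d) ℂ)
    (lam : Fin m → ℝ) (hlam : ∀ j, 0 ≤ lam j) (hlamsum : 1 ≤ ∑ j, lam j)
    (hcorrect : ∀ j,
      ((∑ i, (E i)ᴴ * B j * E i) +
        ((1 : Matrix (Fin d) (Fin d) ℂ) - ∑ i, (E i)ᴴ * E i) - A j).PosSemidef)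
    (hterm : (A₀ - ((1 : Matrix (Fin d) (Fin d) ℂ) - ∑ i, (E i)ᴴ * E i)).PosSemidef) :
    ((∑ i, (E i)ᴴ * (∑ j, (lam j : ℂ) • B j) * E i) +
      ((1 : Matrix (Fin d) (Fin d) ℂ) - ∑ i, (E i)ᴴ * E i)
      - ((∑ j, (lam j : ℂ) • A j) - (((∑ j, lam j : ℝ) : ℂ) - 1) • A₀)).PosSemidef := by
  have hcorrect' (j : Fin m) :
      A j ≤ (heisenbergDual E).restrictScalars ℝ (B j) + (1 - ∑ i, (E i)ᴴ * E i) := by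
    simpa only [le_iff, LinearMap.restrictScalars_apply, heisenbergDual_apply] using hcorrect j
  have h := sum_smul_sub_smul_le_map_sum_smul_add ((heisenbergDual E).restrictScalars ℝ)
    (1 - ∑ i, (E i)ᴴ * E i) A₀ A B lam hlam hlamsum hcorrect' hterm
  rw [← le_iff, ← heisenbergDual_apply, ← Complex.ofReal_one, ← Complex.ofReal_sub]
  -- a real scalar acts on complex matrices through its coercion, definitionally
  exact h

/-- Soundness of rule (R.CC2): given partial correctness
`Aᵢ ⊑ E*(Bᵢ) + (I - E*(I))` for all `i`, and a termination predicate with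
`I - E*(I) ⊑ A`, for `λᵢ ≥ 0` with `Σᵢ λᵢ ≥ 1` it holds that
`Σᵢ λᵢAᵢ - (Σᵢ λᵢ - 1)A ⊑ E*(Σᵢ λᵢBᵢ) + (I - E*(I))`. -/
theorem rule_CC2_sound {d k m : ℕ}
    (E : Fin k → Matrix (Fin d) (Fin d) ℂ)
    (hE : ((1 : Matrix (Fin d) (Fin d) ℂ) - ∑ i, (E i)ᴴ * E i).PosSemidef)
    (A B : Fin m → Matrix (Fin d) (Fin d) ℂ) (A₀ : Matrix (Fin d) (Fin d) ℂ)
    (hA : ∀ j, (A j).PosSemidef)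
    (hA' : ∀ j, ((1 : Matrix (Fin d) (Fin d) ℂ) - A j).PosSemidef)
    (hB : ∀ j, (B j).PosSemidef)
    (hB' : ∀ j, ((1 : Matrix (Fin d) (Fin d) ℂ) - B j).PosSemidef)
    (hA₀ : A₀.PosSemidef) (hA₀' : ((1 : Matrix (Fin d) (Fin d) ℂ) - A₀).PosSemidef)
    (lam : Fin m → ℝ) (hlam : ∀ j, 0 ≤ lam j) (hlamsum : 1 ≤ ∑ j, lam j)
    (hcorrect : ∀ j,
      ((∑ i, (E i)ᴴ * B j * E i) +
        ((1 : Matrix (Fin d) (Fin d) ℂ) - ∑ i, (E i)ᴴ * E i) - A j).PosSemidef)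
    (hterm : (A₀ - ((1 : Matrix (Fin d) (Fin d) ℂ) - ∑ i, (E i)ᴴ * E i)).PosSemidef) :
    ((∑ i, (E i)ᴴ * (∑ j, (lam j : ℂ) • B j) * E i) +
      ((1 : Matrix (Fin d) (Fin d) ℂ) - ∑ i, (E i)ᴴ * E i)
      - ((∑ j, (lam j : ℂ) • A j) - (((∑ j, lam j : ℝ) : ℂ) - 1) • A₀)).PosSemidef :=
  rule_CC2_sound_general E A B A₀ lam hlam hlamsum hcorrect hterm
end

section
/- Soundness of the separable-to-entangled rule (partial correctness): let E be a quantum operation with dual E*, A, B quantum predicates, and 0 < ε ≤ 1. If (1-ε)I + εA ⊑ E*((1-ε)I + εB) + (I - E*(I)), then A ⊑ E*(B) + (I - E*(I)). -/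
open Matrix
open scoped ComplexOrder

/-! By linearity of `E*`, the gap `E*((1-ε)I + εB) + (I - E*(I)) - ((1-ε)I + εA)` equals
`ε • (E*(B) + (I - E*(I)) - A)`: the `(1-ε)` multiples of `I` and of `E*(I)` cancel. Dividing
the positive semidefinite gap by `ε > 0` gives the claim. -/

theorem Matrix.PosSemidef.of_smul {n R α : Type*} [Fintype n] [Ring R] [PartialOrder R]
    [StarRing R] [Semifield α] [PartialOrder α] [PosMulReflectLT α] [StarRing α]
    [StarOrderedRing α] [Algebra α R] [StarModule α R] [PosSMulMono α R] {x : Matrix n n R}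
    {a : α} (hx : (a • x).PosSemidef) (ha : 0 < a) : x.PosSemidef := by
  simpa [smul_smul, inv_mul_cancel₀ ha.ne'] using hx.smul (inv_nonneg.2 ha.le)

theorem Matrix.sum_conjTranspose_mul_smul_one_add_smul_mul {m ι α R : Type*} [Fintype m]
    [DecidableEq m] [Fintype ι] [CommSemiring α] [Ring R] [StarRing R] [Algebra α R]
    (E : ι → Matrix m m R) (a b : α) (B : Matrix m m R) :
    ∑ i, (E i)ᴴ * (a • 1 + b • B) * E i = a • ∑ i, (E i)ᴴ * E i + b • ∑ i, (E i)ᴴ * B * E i := by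
  simp only [mul_add, add_mul, Matrix.mul_smul, Matrix.smul_mul, Matrix.mul_one,
    Finset.sum_add_distrib, Finset.smul_sum]

theorem S2E_rule_sound_partial_general {d k : ℕ}
    (E : Fin k → Matrix (Fin d) (Fin d) ℂ)
    (A B : Matrix (Fin d) (Fin d) ℂ)
    (ε : ℝ) (hε : 0 < ε)
    (hcorrect :
      ((∑ i, (E i)ᴴ * (((1 - ε : ℝ) : ℂ) • (1 : Matrix (Fin d) (Fin d) ℂ) + (ε : ℂ) • B) * E i)
        + ((1 : Matrix (Fin d) (Fin d) ℂ) - ∑ i, (E i)ᴴ * E i)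
        - (((1 - ε : ℝ) : ℂ) • (1 : Matrix (Fin d) (Fin d) ℂ) + (ε : ℂ) • A)).PosSemidef) :
    ((∑ i, (E i)ᴴ * B * E i) +
      ((1 : Matrix (Fin d) (Fin d) ℂ) - ∑ i, (E i)ᴴ * E i) - A).PosSemidef := by
  simp only [Complex.coe_smul, sum_conjTranspose_mul_smul_one_add_smul_mul] at hcorrect
  refine .of_smul ?_ hε
  convert hcorrect using 2
  module

/-- Soundness of rule (R.S2E) for partial correctness: if
`(1-ε)I + εA ⊑ E*((1-ε)I + εB) + (I - E*(I))` for some `0 < ε ≤ 1`, then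
`A ⊑ E*(B) + (I - E*(I))`. -/
theorem S2E_rule_sound_partial {d k : ℕ}
    (E : Fin k → Matrix (Fin d) (Fin d) ℂ)
    (hE : ((1 : Matrix (Fin d) (Fin d) ℂ) - ∑ i, (E i)ᴴ * E i).PosSemidef)
    (A B : Matrix (Fin d) (Fin d) ℂ)
    (hA : A.PosSemidef) (hA' : ((1 : Matrix (Fin d) (Fin d) ℂ) - A).PosSemidef)
    (hB : B.PosSemidef) (hB' : ((1 : Matrix (Fin d) (Fin d) ℂ) - B).PosSemidef)
    (ε : ℝ) (hε : 0 < ε) (hε' : ε ≤ 1)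
    (hcorrect :
      ((∑ i, (E i)ᴴ * (((1 - ε : ℝ) : ℂ) • (1 : Matrix (Fin d) (Fin d) ℂ) + (ε : ℂ) • B) * E i)
        + ((1 : Matrix (Fin d) (Fin d) ℂ) - ∑ i, (E i)ᴴ * E i)
        - (((1 - ε : ℝ) : ℂ) • (1 : Matrix (Fin d) (Fin d) ℂ) + (ε : ℂ) • A)).PosSemidef) :
    ((∑ i, (E i)ᴴ * B * E i) +
      ((1 : Matrix (Fin d) (Fin d) ℂ) - ∑ i, (E i)ᴴ * E i) - A).PosSemidef :=
  S2E_rule_sound_partial_general E A B ε hε hcorrect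
end

section
/- Soundness of the tensor-product parallel composition rule for partial correctness in the two-component case: let E₁, E₂ be quantum operations on finite-dimensional Hilbert spaces H₁, H₂ with duals E₁*, E₂*, and set F = E₁* ⊗ E₂* on H₁ ⊗ H₂ (i.e., the dual of the product operation). Let Aᵢ, Bᵢ be quantum predicates on Hᵢ with Aᵢ ⊑ Eᵢ*(Bᵢ) + (Iᵢ - Eᵢ*(Iᵢ)) for i = 1, 2. Then A₁ ⊗ A₂ ⊑ E₁*(B₁) ⊗ E₂*(B₂) + (I₁ ⊗ I₂ - E₁*(I₁) ⊗ E₂*(I₂)). -/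
open Matrix
open scoped ComplexOrder Kronecker

/-!
Write `Cᵢ = Eᵢ*(Bᵢ)`, `Sᵢ = Eᵢ*(Iᵢ)` and `Dᵢ = Cᵢ + (Iᵢ - Sᵢ)`, so the hypotheses say `Aᵢ ⊑ Dᵢ`.
Since `⊗` is monotone on positive operators, `A₁ ⊗ A₂ ⊑ D₁ ⊗ D₂`, and expanding the tensor
product gives
`C₁ ⊗ C₂ + (I₁ ⊗ I₂ - S₁ ⊗ S₂) - D₁ ⊗ D₂ = (I₁ - S₁) ⊗ (S₂ - C₂) + (S₁ - C₁) ⊗ (I₂ - S₂)`,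
a sum of tensor products of positive operators because `Cᵢ ⊑ Sᵢ ⊑ Iᵢ`.
-/

namespace Matrix

variable {𝕜 : Type*} [RCLike 𝕜] {m n ι : Type*} [Fintype m] [Fintype n] [Fintype ι]

theorem posSemidef_sum_conjTranspose_mul_sub_sum_conjTranspose_mul_mul [DecidableEq m]
    (E : ι → Matrix m n 𝕜) {B : Matrix m m 𝕜} (hB : (1 - B).PosSemidef) :
    (∑ i, (E i)ᴴ * E i - ∑ i, (E i)ᴴ * B * E i).PosSemidef := by
  have h : ∑ i, (E i)ᴴ * E i - ∑ i, (E i)ᴴ * B * E i = ∑ i, (E i)ᴴ * (1 - B) * E i := by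
    simp only [← Finset.sum_sub_distrib, Matrix.mul_sub, Matrix.sub_mul, Matrix.mul_one]
  rw [h]
  exact posSemidef_sum _ fun i _ => hB.conjTranspose_mul_mul_same (E i)

theorem PosSemidef.kronecker_sub_kronecker {A₁ D₁ : Matrix m m 𝕜} {A₂ D₂ : Matrix n n 𝕜}
    (hA₁ : A₁.PosSemidef) (h₁ : (D₁ - A₁).PosSemidef)
    (hA₂ : A₂.PosSemidef) (h₂ : (D₂ - A₂).PosSemidef) :
    (D₁ ⊗ₖ D₂ - A₁ ⊗ₖ A₂).PosSemidef := by
  have hD₁ : D₁.PosSemidef := by simpa using h₁.add hA₁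
  have h : D₁ ⊗ₖ D₂ - A₁ ⊗ₖ A₂ = (D₁ - A₁) ⊗ₖ A₂ + D₁ ⊗ₖ (D₂ - A₂) := by
    ext i j
    simp only [add_apply, sub_apply, kroneckerMap_apply]
    ring
  rw [h]
  exact (h₁.kronecker hA₂).add (hD₁.kronecker h₂)

theorem posSemidef_kronecker_add_one_sub_sub_kronecker [DecidableEq m] [DecidableEq n]
    {C₁ S₁ : Matrix m m 𝕜} {C₂ S₂ : Matrix n n 𝕜}
    (hS₁ : (1 - S₁).PosSemidef) (hC₁ : (S₁ - C₁).PosSemidef)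
    (hS₂ : (1 - S₂).PosSemidef) (hC₂ : (S₂ - C₂).PosSemidef) :
    (C₁ ⊗ₖ C₂ + ((1 : Matrix m m 𝕜) ⊗ₖ (1 : Matrix n n 𝕜) - S₁ ⊗ₖ S₂)
      - (C₁ + (1 - S₁)) ⊗ₖ (C₂ + (1 - S₂))).PosSemidef := by
  have h : C₁ ⊗ₖ C₂ + ((1 : Matrix m m 𝕜) ⊗ₖ (1 : Matrix n n 𝕜) - S₁ ⊗ₖ S₂)
      - (C₁ + (1 - S₁)) ⊗ₖ (C₂ + (1 - S₂)) = (1 - S₁) ⊗ₖ (S₂ - C₂) + (S₁ - C₁) ⊗ₖ (1 - S₂) := by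
    ext i j
    simp only [add_apply, sub_apply, kroneckerMap_apply]
    ring
  rw [h]
  exact (hS₁.kronecker hC₂).add (hC₁.kronecker hS₂)

end Matrix

theorem parallel_composition_partial_sound_general {d₁ d₂ k₁ k₂ : ℕ}
    (E₁ : Fin k₁ → Matrix (Fin d₁) (Fin d₁) ℂ)
    (E₂ : Fin k₂ → Matrix (Fin d₂) (Fin d₂) ℂ)
    (hE₁ : ((1 : Matrix (Fin d₁) (Fin d₁) ℂ) - ∑ i, (E₁ i)ᴴ * E₁ i).PosSemidef)
    (hE₂ : ((1 : Matrix (Fin d₂) (Fin d₂) ℂ) - ∑ i, (E₂ i)ᴴ * E₂ i).PosSemidef)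
    (A₁ B₁ : Matrix (Fin d₁) (Fin d₁) ℂ) (A₂ B₂ : Matrix (Fin d₂) (Fin d₂) ℂ)
    (hA₁ : A₁.PosSemidef)
    (hB₁' : ((1 : Matrix (Fin d₁) (Fin d₁) ℂ) - B₁).PosSemidef)
    (hA₂ : A₂.PosSemidef)
    (hB₂' : ((1 : Matrix (Fin d₂) (Fin d₂) ℂ) - B₂).PosSemidef)
    (hcorrect₁ : ((∑ i, (E₁ i)ᴴ * B₁ * E₁ i) +
      ((1 : Matrix (Fin d₁) (Fin d₁) ℂ) - ∑ i, (E₁ i)ᴴ * E₁ i) - A₁).PosSemidef)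
    (hcorrect₂ : ((∑ i, (E₂ i)ᴴ * B₂ * E₂ i) +
      ((1 : Matrix (Fin d₂) (Fin d₂) ℂ) - ∑ i, (E₂ i)ᴴ * E₂ i) - A₂).PosSemidef) :
    (((∑ i, (E₁ i)ᴴ * B₁ * E₁ i) ⊗ₖ (∑ i, (E₂ i)ᴴ * B₂ * E₂ i)) +
      (((1 : Matrix (Fin d₁) (Fin d₁) ℂ) ⊗ₖ (1 : Matrix (Fin d₂) (Fin d₂) ℂ)) -
        ((∑ i, (E₁ i)ᴴ * E₁ i) ⊗ₖ (∑ i, (E₂ i)ᴴ * E₂ i)))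
      - (A₁ ⊗ₖ A₂)).PosSemidef := by
  have hgap := posSemidef_kronecker_add_one_sub_sub_kronecker hE₁
    (posSemidef_sum_conjTranspose_mul_sub_sum_conjTranspose_mul_mul E₁ hB₁') hE₂
    (posSemidef_sum_conjTranspose_mul_sub_sum_conjTranspose_mul_mul E₂ hB₂')
  have hmono := hA₁.kronecker_sub_kronecker hcorrect₁ hA₂ hcorrect₂
  simpa only [sub_add_sub_cancel] using hgap.add hmono

/-- Soundness of the tensor-product parallel composition rule (R.PC.P) for
partial correctness, two-component case: if `Aᵢ ⊑ Eᵢ*(Bᵢ) + (Iᵢ - Eᵢ*(Iᵢ))`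
for `i = 1,2`, then
`A₁ ⊗ A₂ ⊑ E₁*(B₁) ⊗ E₂*(B₂) + (I₁ ⊗ I₂ - E₁*(I₁) ⊗ E₂*(I₂))`. -/
theorem parallel_composition_partial_sound {d₁ d₂ k₁ k₂ : ℕ}
    (E₁ : Fin k₁ → Matrix (Fin d₁) (Fin d₁) ℂ)
    (E₂ : Fin k₂ → Matrix (Fin d₂) (Fin d₂) ℂ)
    (hE₁ : ((1 : Matrix (Fin d₁) (Fin d₁) ℂ) - ∑ i, (E₁ i)ᴴ * E₁ i).PosSemidef)
    (hE₂ : ((1 : Matrix (Fin d₂) (Fin d₂) ℂ) - ∑ i, (E₂ i)ᴴ * E₂ i).PosSemidef)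
    (A₁ B₁ : Matrix (Fin d₁) (Fin d₁) ℂ) (A₂ B₂ : Matrix (Fin d₂) (Fin d₂) ℂ)
    (hA₁ : A₁.PosSemidef) (hA₁' : ((1 : Matrix (Fin d₁) (Fin d₁) ℂ) - A₁).PosSemidef)
    (hB₁ : B₁.PosSemidef) (hB₁' : ((1 : Matrix (Fin d₁) (Fin d₁) ℂ) - B₁).PosSemidef)
    (hA₂ : A₂.PosSemidef) (hA₂' : ((1 : Matrix (Fin d₂) (Fin d₂) ℂ) - A₂).PosSemidef)
    (hB₂ : B₂.PosSemidef) (hB₂' : ((1 : Matrix (Fin d₂) (Fin d₂) ℂ) - B₂).PosSemidef)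
    (hcorrect₁ : ((∑ i, (E₁ i)ᴴ * B₁ * E₁ i) +
      ((1 : Matrix (Fin d₁) (Fin d₁) ℂ) - ∑ i, (E₁ i)ᴴ * E₁ i) - A₁).PosSemidef)
    (hcorrect₂ : ((∑ i, (E₂ i)ᴴ * B₂ * E₂ i) +
      ((1 : Matrix (Fin d₂) (Fin d₂) ℂ) - ∑ i, (E₂ i)ᴴ * E₂ i) - A₂).PosSemidef) :
    (((∑ i, (E₁ i)ᴴ * B₁ * E₁ i) ⊗ₖ (∑ i, (E₂ i)ᴴ * B₂ * E₂ i)) +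
      (((1 : Matrix (Fin d₁) (Fin d₁) ℂ) ⊗ₖ (1 : Matrix (Fin d₂) (Fin d₂) ℂ)) -
        ((∑ i, (E₁ i)ᴴ * E₁ i) ⊗ₖ (∑ i, (E₂ i)ᴴ * E₂ i)))
      - (A₁ ⊗ₖ A₂)).PosSemidef :=
  parallel_composition_partial_sound_general E₁ E₂ hE₁ hE₂ A₁ B₁ A₂ B₂ hA₁ hB₁' hA₂ hB₂' hcorrect₁
    hcorrect₂
end

section
/- The key tensor-product inequality for disjoint parallel composition: let Fᵢ, Gᵢ be positive semidefinite operators on finite-dimensional Hilbert spaces Hᵢ (i = 1,…,n) with Gᵢ ⊑ Fᵢ ⊑ Iᵢ. Then ⊗ᵢ(Gᵢ + (Iᵢ - Fᵢ)) ⊑ ⊗ᵢ Gᵢ + (⊗ᵢ Iᵢ - ⊗ᵢ Fᵢ). -/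
/-! Split `Iᵢ = Gᵢ + (Iᵢ - Fᵢ) + (Fᵢ - Gᵢ)` into three positive semidefinite pieces `cᵢ 0`,
`cᵢ 1`, `cᵢ 2`. Each of the four tensor products in the theorem is `⊗ᵢ` of a partial sum of these
pieces, so expanding multilinearly makes it a sum of `⊗ᵢ cᵢ (pᵢ)` over a box of words
`p : Fin n → Fin 3`. By inclusion–exclusion the difference in question is the sum over the words
that use both `1` and `2`, and a tensor product of positive semidefinite matrices `Bᵢᴴ Bᵢ` is
`(⊗ᵢ Bᵢ)ᴴ (⊗ᵢ Bᵢ)`, hence positive semidefinite. -/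

open Matrix
open scoped ComplexOrder

/-- The `n`-fold tensor product of matrices `Mᵢ` on spaces indexed by
`Fin (d i)`, realized as a matrix on the product index type. -/
def tensorFamily {n : ℕ} {d : Fin n → ℕ}
    (M : ∀ i, Matrix (Fin (d i)) (Fin (d i)) ℂ) :
    Matrix (∀ i, Fin (d i)) (∀ i, Fin (d i)) ℂ :=
  Matrix.of fun x y => ∏ i, M i (x i) (y i)

section tensorFamily

variable {n : ℕ} {d : Fin n → ℕ}

lemma tensorFamily_sum {κ : Fin n → Type*} (t : ∀ i, Finset (κ i))
    (M : ∀ i, κ i → Matrix (Fin (d i)) (Fin (d i)) ℂ) :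
    tensorFamily (fun i => ∑ j ∈ t i, M i j)
      = ∑ p ∈ Fintype.piFinset t, tensorFamily (fun i => M i (p i)) := by
  ext x y
  simp only [tensorFamily, Matrix.sum_apply, of_apply]
  exact Finset.prod_univ_sum t fun i j => M i j (x i) (y i)

lemma tensorFamily_mul (M N : ∀ i, Matrix (Fin (d i)) (Fin (d i)) ℂ) :
    tensorFamily M * tensorFamily N = tensorFamily (fun i => M i * N i) := by
  ext x y
  simp only [tensorFamily, mul_apply, of_apply, Finset.prod_mul_distrib.symm]
  rw [Finset.prod_univ_sum (fun _ => Finset.univ), Fintype.piFinset_univ]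

lemma conjTranspose_tensorFamily (M : ∀ i, Matrix (Fin (d i)) (Fin (d i)) ℂ) :
    (tensorFamily M)ᴴ = tensorFamily (fun i => (M i)ᴴ) := by
  ext x y
  exact map_prod (starRingEnd ℂ) (fun i => M i (y i) (x i)) Finset.univ

open scoped MatrixOrder in
lemma PosSemidef.tensorFamily {M : ∀ i, Matrix (Fin (d i)) (Fin (d i)) ℂ}
    (hM : ∀ i, (M i).PosSemidef) : (tensorFamily M).PosSemidef := by
  choose B hB using fun i => CStarAlgebra.nonneg_iff_eq_star_mul_self.mp (hM i).nonneg
  rw [funext hB, ← tensorFamily_mul]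
  simp only [star_eq_conjTranspose, ← conjTranspose_tensorFamily]
  exact posSemidef_conjTranspose_mul_self _

lemma posSemidef_tensorFamily_inclusion_exclusion {κ : Type*} [Fintype κ] [DecidableEq κ]
    (c : ∀ i, κ → Matrix (Fin (d i)) (Fin (d i)) ℂ) (hc : ∀ i j, (c i j).PosSemidef)
    (S T : Finset κ) :
    (tensorFamily (fun i => ∑ j, c i j) - tensorFamily (fun i => ∑ j ∈ S, c i j)
      - tensorFamily (fun i => ∑ j ∈ T, c i j)
      + tensorFamily (fun i => ∑ j ∈ S ∩ T, c i j)).PosSemidef := by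
  set A := Fintype.piFinset fun _ : Fin n => S
  set B := Fintype.piFinset fun _ : Fin n => T
  set word : (Fin n → κ) → Matrix (∀ i, Fin (d i)) (∀ i, Fin (d i)) ℂ :=
    fun p => _root_.tensorFamily fun i => c i (p i)
  have hsplit : ∑ p, word p - ∑ p ∈ A, word p - ∑ p ∈ B, word p + ∑ p ∈ A ∩ B, word p
      = ∑ p ∈ (A ∪ B)ᶜ, word p := by
    rw [← Finset.sum_compl_add_sum (A ∪ B),
      eq_sub_of_add_eq (Finset.sum_union_inter (s₁ := A) (s₂ := B) (f := word))]
    abel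
  simp only [tensorFamily_sum, Fintype.piFinset_inter]
  rw [Fintype.piFinset_univ, hsplit]
  exact Finset.sum_induction _ _ (fun _ _ => PosSemidef.add) PosSemidef.zero
    fun p _ => PosSemidef.tensorFamily fun i => hc i (p i)

end tensorFamily

theorem tensor_product_inequality_general {n : ℕ} {d : Fin n → ℕ}
    (F G : ∀ i, Matrix (Fin (d i)) (Fin (d i)) ℂ)
    (hG : ∀ i, (G i).PosSemidef)
    (hGF : ∀ i, (F i - G i).PosSemidef)
    (hFI : ∀ i, ((1 : Matrix (Fin (d i)) (Fin (d i)) ℂ) - F i).PosSemidef) :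
    (tensorFamily G +
      (tensorFamily (fun i => (1 : Matrix (Fin (d i)) (Fin (d i)) ℂ)) - tensorFamily F)
      - tensorFamily (fun i => G i + ((1 : Matrix (Fin (d i)) (Fin (d i)) ℂ) - F i))).PosSemidef := by
  set c : ∀ i, Fin 3 → Matrix (Fin (d i)) (Fin (d i)) ℂ := fun i => ![G i, 1 - F i, F i - G i]
  have hc : ∀ i j, (c i j).PosSemidef := fun i j => by
    fin_cases j
    exacts [hG i, hFI i, hGF i]
  have key := posSemidef_tensorFamily_inclusion_exclusion c hc {0, 2} {0, 1}
  have hinter : ({0, 2} ∩ {0, 1} : Finset (Fin 3)) = {0} := by decide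
  have hone : ∀ i, G i + (1 - F i) + (F i - G i) = 1 := fun i => by abel
  simp only [hinter, Fin.sum_univ_three, Finset.sum_pair (show (0 : Fin 3) ≠ 2 by decide),
    Finset.sum_pair (show (0 : Fin 3) ≠ 1 by decide), Finset.sum_singleton, c,
    Matrix.cons_val_zero, Matrix.cons_val_one, Matrix.cons_val_two, Matrix.head_cons,
    Matrix.tail_cons, add_sub_cancel, hone] at key
  convert key using 1
  abel

/-- Key tensor-product inequality for disjoint parallel composition: if
`Gᵢ ⊑ Fᵢ ⊑ Iᵢ` with `Gᵢ, Fᵢ` positive semidefinite, then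
`⊗ᵢ(Gᵢ + (Iᵢ - Fᵢ)) ⊑ ⊗ᵢGᵢ + (⊗ᵢIᵢ - ⊗ᵢFᵢ)`. -/
theorem tensor_product_inequality {n : ℕ} {d : Fin n → ℕ}
    (F G : ∀ i, Matrix (Fin (d i)) (Fin (d i)) ℂ)
    (hG : ∀ i, (G i).PosSemidef)
    (hF : ∀ i, (F i).PosSemidef)
    (hGF : ∀ i, (F i - G i).PosSemidef)
    (hFI : ∀ i, ((1 : Matrix (Fin (d i)) (Fin (d i)) ℂ) - F i).PosSemidef) :
    (tensorFamily G +
      (tensorFamily (fun i => (1 : Matrix (Fin (d i)) (Fin (d i)) ℂ)) - tensorFamily F)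
      - tensorFamily (fun i => G i + ((1 : Matrix (Fin (d i)) (Fin (d i)) ℂ) - F i))).PosSemidef :=
  tensor_product_inequality_general F G hG hGF hFI
end
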